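/- For natural numbers d ≥ 2 and n ≥ d, the uniform matroid U_{d,n} is regular if and only if it is binary, if and only if it has a unique minimal tropical basis. -/

import Mathlib

open scoped symmDiff

/-- A matroid presented by its circuit set on ground set `Fin n`. -/
structure CircuitSet (n : ℕ) where
  circuits : Set (Finset (Fin n))
  empty_not_mem : ∅ ∉ circuits
  antichain : ∀ C₁ ∈ circuits, ∀ C₂ ∈ circuits, C₁ ⊆ C₂ → C₁ = C₂
  elimination : ∀ C₁ ∈ circuits, ∀ C₂ ∈ circuits, C₁ ≠ C₂ →
    ∀ e ∈ C₁ ∩ C₂, ∃ C₃ ∈ circuits, C₃ ⊆ (C₁ ∪ C₂) \ {e}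

/-- Tropical projective space: tuples in (ℝ ∪ {±∞})ᵀ, not identically -∞
(we model tropical numbers ℝ ∪ {-∞} inside `EReal`; points of `TP` avoid `⊤` as well). -/
def TP (n : ℕ) : Set (Fin n → EReal) :=
  {x | (∀ i, x i ≠ ⊤) ∧ ∃ i, x i ≠ ⊥}

/-- The tropical hyperplane of a circuit: the maximum over the circuit is attained twice. -/
def V {n : ℕ} (D : Finset (Fin n)) : Set (Fin n → EReal) :=
  {x | ∃ i ∈ D, ∃ j ∈ D, i ≠ j ∧ x i = x j ∧ ∀ k ∈ D, x k ≤ x i}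

/-- `B` is a tropical basis: a subset of the circuit set whose tropical prevariety
equals the Bergman fan. -/
def IsTropicalBasis {n : ℕ} (M : CircuitSet n) (B : Set (Finset (Fin n))) : Prop :=
  B ⊆ M.circuits ∧ (TP n ∩ ⋂ D ∈ B, V D) = (TP n ∩ ⋂ D ∈ M.circuits, V D)

def IsMinimalTropicalBasis {n : ℕ} (M : CircuitSet n) (B : Set (Finset (Fin n))) : Prop :=
  IsTropicalBasis M B ∧ ∀ B' ⊂ B, ¬ IsTropicalBasis M B'

def HasUniqueMinimalTropicalBasis {n : ℕ} (M : CircuitSet n) : Prop :=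
  ∃! B, IsMinimalTropicalBasis M B

/-- The intersection `B_M` of all tropical bases of `M`. -/
def troBasisInter {n : ℕ} (M : CircuitSet n) : Set (Finset (Fin n)) :=
  ⋂₀ {B | IsTropicalBasis M B}

/-- Simple matroid: every circuit has cardinality at least 3. -/
def CircuitSet.Simple {n : ℕ} (M : CircuitSet n) : Prop :=
  ∀ C ∈ M.circuits, 3 ≤ C.card

/-- Binary matroid (circuit characterization): the symmetric difference of any two
circuits is a disjoint union of circuits. -/
def CircuitSet.BinarySD {n : ℕ} (M : CircuitSet n) : Prop :=
  ∀ C₁ ∈ M.circuits, ∀ C₂ ∈ M.circuits,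
    ∃ S : Finset (Finset (Fin n)), ↑S ⊆ M.circuits ∧
      (S : Set (Finset (Fin n))).PairwiseDisjoint id ∧ C₁ ∆ C₂ = S.sup id

/-- `M` is representable over the field `K`: its circuits are exactly the minimal
linearly dependent subsets of some family of vectors. -/
def Represents (K : Type) [Field K] {n : ℕ} (M : CircuitSet n) : Prop :=
  ∃ (m : ℕ) (v : Fin n → (Fin m → K)),
    ∀ C : Finset (Fin n), C ∈ M.circuits ↔
      (¬ LinearIndependent K (fun i : ↥C => v i.1) ∧
        ∀ D : Finset (Fin n), D ⊂ C → LinearIndependent K (fun i : ↥D => v i.1))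

/-!
For `n ≤ d + 1` the uniform matroid has at most one circuit. It is represented over every field
by `e₀, …, e_{d-1}, -(e₀ + ⋯ + e_{d-1})` (the first `n` of them), and its circuit set is the
least tropical basis, since the empty set is not one.

For `n ≥ d + 2` both properties fail. Over `𝔽₂` the vectors of a circuit sum to zero, so the
circuits `B ∪ {a}` and `B ∪ {b}` force `v a = v b`: a dependent pair, impossible when `d ≥ 2`.
Every circuit `C` is redundant in the tropical basis: if the maximum is attained twice on every
other circuit, then trading an outside element `b` first for the maximiser of `C` and then for
another element of `C` shows that it is attained twice on `C` too. A least tropical basis would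
therefore be empty, but the point that is `0` in one coordinate and `-∞` elsewhere lies in `TP`
and on no `V C` with `C` through that coordinate.
-/

def CircuitSet.IsRepresentedBy {n : ℕ} (M : CircuitSet n) (K : Type*) {W : Type*} [Field K]
    [AddCommGroup W] [Module K W] (v : Fin n → W) : Prop :=
  ∀ C : Finset (Fin n), C ∈ M.circuits ↔
    ¬ LinearIndepOn K v (C : Set (Fin n)) ∧ ∀ D ⊂ C, LinearIndepOn K v (D : Set (Fin n))

theorem represents_iff {n : ℕ} (K : Type) [Field K] (M : CircuitSet n) :
    Represents K M ↔ ∃ (m : ℕ) (v : Fin n → Fin m → K), M.IsRepresentedBy K v :=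
  Iff.rfl

theorem not_linearIndepOn_of_sum_eq_zero {R M ι : Type*} [Ring R] [Nontrivial R]
    [AddCommGroup M] [Module R M] {v : ι → M} {s : Finset ι} (hs : s.Nonempty)
    (h : ∑ i ∈ s, v i = 0) : ¬ LinearIndepOn R v (s : Set ι) := by
  obtain ⟨i, hi⟩ := hs
  exact not_linearIndepOn_finset_iff.2 ⟨fun _ => (1 : R), by simpa using h, i, hi, one_ne_zero⟩

namespace CircuitSet.IsRepresentedBy

variable {K W : Type*} [Field K] [AddCommGroup W] [Module K W] {n : ℕ} {M : CircuitSet n}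
  {v : Fin n → W}

theorem exists_mem_circuits_subset (hv : M.IsRepresentedBy K v) (C : Finset (Fin n))
    (hC : ¬ LinearIndepOn K v (C : Set (Fin n))) : ∃ D ∈ M.circuits, D ⊆ C := by
  induction C using Finset.strongInduction with
  | H C ih =>
    by_cases hmin : ∀ D ⊂ C, LinearIndepOn K v (D : Set (Fin n))
    · exact ⟨C, (hv C).2 ⟨hC, hmin⟩, subset_rfl⟩
    · push Not at hmin
      obtain ⟨D, hDC, hD⟩ := hmin
      obtain ⟨E, hE, hED⟩ := ih D hDC hD
      exact ⟨E, hE, hED.trans hDC.subset⟩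

theorem sum_eq_zero [Module (ZMod 2) W] (hv : M.IsRepresentedBy (ZMod 2) v) {C : Finset (Fin n)}
    (hC : C ∈ M.circuits) : ∑ i ∈ C, v i = 0 := by
  obtain ⟨hdep, hmin⟩ := (hv C).1 hC
  obtain ⟨g, hg, i, hi, hgi⟩ := not_linearIndepOn_finset_iff.1 hdep
  have hsupp : ∑ j ∈ C with g j ≠ 0, v j = 0 := by
    refine (Finset.sum_filter _ _).trans (Eq.trans (Finset.sum_congr rfl fun j _ => ?_) hg)
    rcases (by decide : ∀ a : ZMod 2, a = 0 ∨ a = 1) (g j) with h | h <;> simp [h]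
  have hfull : C.filter (g · ≠ 0) = C := by
    by_contra hne
    exact not_linearIndepOn_of_sum_eq_zero ⟨i, Finset.mem_filter.2 ⟨hi, hgi⟩⟩ hsupp
      (hmin _ ((Finset.filter_subset _ C).ssubset_of_ne hne))
  rwa [hfull] at hsupp

end CircuitSet.IsRepresentedBy

def simplexVec (K : Type*) [Field K] (d : ℕ) (i : Fin (d + 1)) : Fin d → K := fun k =>
  (if i = k.castSucc then 1 else 0) - (if i = Fin.last d then 1 else 0)

theorem sum_smul_simplexVec_apply {K : Type*} [Field K] {d : ℕ} (C : Finset (Fin (d + 1)))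
    (g : Fin (d + 1) → K) (k : Fin d) :
    (∑ i ∈ C, g i • simplexVec K d i) k =
      (if k.castSucc ∈ C then g k.castSucc else 0) -
        (if Fin.last d ∈ C then g (Fin.last d) else 0) := by
  simp [simplexVec, Finset.sum_apply, mul_sub, Finset.sum_sub_distrib]

theorem linearIndepOn_simplexVec_iff {K : Type*} [Field K] {d : ℕ} (C : Finset (Fin (d + 1))) :
    LinearIndepOn K (simplexVec K d) (C : Set (Fin (d + 1))) ↔ C ≠ Finset.univ := by
  constructor
  · rintro hC rfl
    refine not_linearIndepOn_of_sum_eq_zero Finset.univ_nonempty ?_ hC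
    ext k
    simpa using sum_smul_simplexVec_apply Finset.univ (fun _ => (1 : K)) k
  · intro hC
    obtain ⟨a, ha⟩ : ∃ a, a ∉ C := by simpa [Finset.eq_univ_iff_forall] using hC
    refine linearIndepOn_finset_iff.2 fun g hg => ?_
    set G : Fin (d + 1) → K := fun i => if i ∈ C then g i else 0
    have hconst : ∀ i, G i = G (Fin.last d) := by
      refine Fin.lastCases rfl fun k => ?_
      have hk := congrFun hg k
      rwa [sum_smul_simplexVec_apply, Pi.zero_apply, sub_eq_zero] at hk
    have hG : ∀ i, G i = 0 := fun i => (hconst i).trans ((hconst a).symm.trans (if_neg ha))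
    intro i hi
    simpa [G, hi] using hG i

theorem linearIndepOn_simplexVec_comp_castLE_iff {K : Type*} [Field K] {n d : ℕ} (h : n ≤ d + 1)
    (C : Finset (Fin n)) :
    LinearIndepOn K (simplexVec K d ∘ Fin.castLE h) (C : Set (Fin n)) ↔ C.card ≤ d := by
  have hinj := Fin.castLE_injective h
  have hcomp : LinearIndepOn K (simplexVec K d ∘ Fin.castLE h) (C : Set (Fin n)) ↔
      LinearIndepOn K (simplexVec K d) (C.map (Fin.castLEEmb h) : Set (Fin (d + 1))) := by
    rw [Finset.coe_map]
    exact ⟨LinearIndepOn.image_of_comp _ _, fun hC => hC.comp_of_image hinj.injOn⟩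
  have hcard : C.card ≤ d + 1 := (Finset.card_le_univ C).trans (by simpa using h)
  rw [hcomp, linearIndepOn_simplexVec_iff, Ne, ← Finset.card_eq_iff_eq_univ, Finset.card_map,
    Fintype.card_fin]
  omega

theorem isRepresentedBy_of_linearIndepOn_iff_card_le {K W : Type*} [Field K] [AddCommGroup W]
    [Module K W] {n d : ℕ} {M : CircuitSet n} (hM : M.circuits = {C | C.card = d + 1})
    {v : Fin n → W} (hv : ∀ C : Finset (Fin n), LinearIndepOn K v (C : Set (Fin n)) ↔ C.card ≤ d) :
    M.IsRepresentedBy K v := by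
  intro C
  simp only [hM, Set.mem_ofPred_eq, hv, not_le]
  constructor
  · intro hC
    exact ⟨by omega, fun D hD => by have := Finset.card_lt_card hD; omega⟩
  · rintro ⟨hC, hsub⟩
    by_contra hne
    obtain ⟨D, hDC, hD⟩ := Finset.exists_subset_card_eq (show d + 1 ≤ C.card by omega)
    have := hsub D (hDC.ssubset_of_ne (by rintro rfl; exact hne hD))
    omega

theorem represents_uniform_of_le (K : Type) [Field K] {n d : ℕ} (h : n ≤ d + 1) {M : CircuitSet n}
    (hM : M.circuits = {C | C.card = d + 1}) : Represents K M :=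
  ⟨d, _, isRepresentedBy_of_linearIndepOn_iff_card_le hM
    (linearIndepOn_simplexVec_comp_castLE_iff h)⟩

theorem not_represents_zmod_two_uniform {n d : ℕ} (hd : 2 ≤ d) (hn : d + 2 ≤ n) {M : CircuitSet n}
    (hM : M.circuits = {C | C.card = d + 1}) : ¬ Represents (ZMod 2) M := by
  rw [represents_iff]
  rintro ⟨m, v, hv⟩
  have hindep : ∀ C : Finset (Fin n), C.card ≤ d → LinearIndepOn (ZMod 2) v (C : Set (Fin n)) := by
    intro C hC
    by_contra hdep
    obtain ⟨D, hD, hDC⟩ := hv.exists_mem_circuits_subset C hdep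
    rw [hM, Set.mem_ofPred_eq] at hD
    have := Finset.card_le_card hDC
    omega
  obtain ⟨T, -, hT⟩ := Finset.exists_subset_card_eq (s := (Finset.univ : Finset (Fin n)))
    (n := d + 2) (by simpa using hn)
  obtain ⟨a, T', haT', rfl, hT'⟩ := Finset.card_eq_succ.1 hT
  obtain ⟨b, B, hbB, rfl, hB⟩ := Finset.card_eq_succ.1 hT'
  have hab : a ≠ b := by rintro rfl; simp at haT'
  have haB : a ∉ B := fun h => haT' (Finset.mem_insert_of_mem h)
  have hcirc : ∀ x ∉ B, v x + ∑ i ∈ B, v i = 0 := fun x hx => by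
    rw [← Finset.sum_insert hx]
    exact hv.sum_eq_zero (by rw [hM, Set.mem_ofPred_eq, Finset.card_insert_of_notMem hx, hB])
  have hpair : ∑ i ∈ {a, b}, v i = 0 := by
    set s := ∑ i ∈ B, v i
    calc ∑ i ∈ {a, b}, v i = (v a + s) + (v b + s) - (2 : ZMod 2) • s := by
          rw [Finset.sum_pair hab, two_smul]; abel
      _ = 0 := by rw [hcirc a haB, hcirc b hbB, show (2 : ZMod 2) = 0 from rfl, zero_smul]; simp
  exact not_linearIndepOn_of_sum_eq_zero (by simp) hpair
    (hindep _ (by rw [Finset.card_pair hab]; exact hd))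

section Tropical

variable {n : ℕ}

theorem exists_ne_forall_le_of_mem_V {D : Finset (Fin n)} {x : Fin n → EReal} (hx : x ∈ V D)
    (a : Fin n) : ∃ i ∈ D, i ≠ a ∧ ∀ k ∈ D, x k ≤ x i := by
  obtain ⟨i, hi, j, hj, hij, hxij, hmax⟩ := hx
  by_cases hia : i = a
  · exact ⟨j, hj, hia ▸ hij.symm, hxij ▸ hmax⟩
  · exact ⟨i, hi, hia, hmax⟩

theorem mem_V_of_forall_mem_V_insert_erase {C : Finset (Fin n)} {b : Fin n}
    {x : Fin n → EReal} (hb : b ∉ C) (hC : 1 < C.card)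
    (h : ∀ e ∈ C, x ∈ V (insert b (C.erase e))) : x ∈ V C := by
  by_contra hx
  obtain ⟨a, ha, hmax⟩ := C.exists_max_image x (Finset.card_pos.1 (by omega))
  have hlt : ∀ k ∈ C, k ≠ a → x k < x a := fun k hk hka =>
    (hmax k hk).lt_of_ne fun heq => hx ⟨k, hk, a, ha, hka, heq, heq ▸ hmax⟩
  have hb_lt : x b < x a := by
    obtain ⟨i, hi, hib, himax⟩ := exists_ne_forall_le_of_mem_V (h a ha) b
    obtain ⟨hia, hiC⟩ := Finset.mem_erase.1 ((Finset.mem_insert.1 hi).resolve_left hib)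
    exact (himax b (Finset.mem_insert_self _ _)).trans_lt (hlt i hiC hia)
  obtain ⟨c, hc, hca⟩ := Finset.exists_mem_ne hC a
  obtain ⟨j, hj, hja, hjmax⟩ := exists_ne_forall_le_of_mem_V (h c hc) a
  have hxa : x a ≤ x j := hjmax a (Finset.mem_insert_of_mem (Finset.mem_erase.2 ⟨hca.symm, ha⟩))
  rcases Finset.mem_insert.1 hj with rfl | hj
  · exact hxa.not_gt hb_lt
  · exact hxa.not_gt (hlt j (Finset.mem_of_mem_erase hj) hja)

variable (M : CircuitSet n)

theorem isTropicalBasis_circuits : IsTropicalBasis M M.circuits := ⟨subset_rfl, rfl⟩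

theorem not_isTropicalBasis_empty (h : M.circuits.Nonempty) : ¬ IsTropicalBasis M ∅ := by
  rintro ⟨-, hB⟩
  obtain ⟨C, hC⟩ := h
  obtain ⟨a, ha⟩ := Finset.nonempty_iff_ne_empty.2 (ne_of_mem_of_not_mem hC M.empty_not_mem)
  set x : Fin n → EReal := fun i => if i = a then 0 else ⊥
  have hxTP : x ∈ TP n := ⟨fun i => by by_cases hi : i = a <;> simp [x, hi], a, by simp [x]⟩
  have hxV : x ∉ V C := by
    have hmax : ∀ i, x a ≤ x i → i = a := fun i hi => by
      by_contra hia
      simp [x, hia] at hi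
    rintro ⟨i, -, j, -, hij, hxij, himax⟩
    exact hij ((hmax i (himax a ha)).trans (hmax j (hxij ▸ himax a ha)).symm)
  have hx : x ∈ TP n ∩ ⋂ D ∈ M.circuits, V D := hB ▸ ⟨hxTP, by simp⟩
  exact hxV (Set.mem_iInter₂.1 hx.2 C hC)

theorem isMinimalTropicalBasis_iff {B : Set (Finset (Fin n))} :
    IsMinimalTropicalBasis M B ↔ Minimal (IsTropicalBasis M) B :=
  Set.minimal_iff_forall_ssubset.symm

theorem hasUniqueMinimalTropicalBasis_iff_exists_isLeast :
    HasUniqueMinimalTropicalBasis M ↔ ∃ B₀, IsLeast {B | IsTropicalBasis M B} B₀ := by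
  constructor
  · rintro ⟨B₀, hB₀, huniq⟩
    refine ⟨B₀, hB₀.1, fun B hB => ?_⟩
    obtain ⟨B₁, hB₁B, hB₁⟩ := exists_minimal_le_of_wellFoundedLT (IsTropicalBasis M) B hB
    exact huniq B₁ ((isMinimalTropicalBasis_iff M).2 hB₁) ▸ hB₁B
  · rintro ⟨B₀, hB₀, hleast⟩
    refine ⟨B₀, (isMinimalTropicalBasis_iff M).2 ⟨hB₀, fun B hB _ => hleast hB⟩, fun B hB => ?_⟩
    have hB := (isMinimalTropicalBasis_iff M).1 hB
    exact hB.eq_of_superset hB₀ (hleast hB.prop)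

theorem isLeast_circuits_of_subsingleton (h : M.circuits.Subsingleton) :
    IsLeast {B | IsTropicalBasis M B} M.circuits := by
  refine ⟨isTropicalBasis_circuits M, fun B hB C hC => ?_⟩
  obtain ⟨D, hD⟩ := Set.nonempty_iff_ne_empty.2
    (fun hempty => not_isTropicalBasis_empty M ⟨C, hC⟩ (hempty ▸ hB))
  exact h (hB.1 hD) hC ▸ hD

end Tropical

section Uniform

variable {n d : ℕ} {M : CircuitSet n}

theorem subsingleton_setOf_card_eq (h : n ≤ d + 1) :
    {C : Finset (Fin n) | C.card = d + 1}.Subsingleton := by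
  have huniv : ∀ C : Finset (Fin n), C.card = d + 1 → C = Finset.univ := fun C hC =>
    C.eq_univ_of_card (by have := card_finset_fin_le C; rw [Fintype.card_fin]; omega)
  exact fun C hC D hD => (huniv C hC).trans (huniv D hD).symm

theorem nonempty_setOf_card_eq (h : d + 1 ≤ n) :
    {C : Finset (Fin n) | C.card = d + 1}.Nonempty := by
  obtain ⟨C, -, hC⟩ := Finset.exists_subset_card_eq (s := (Finset.univ : Finset (Fin n)))
    (n := d + 1) (by simpa using h)
  exact ⟨C, hC⟩

theorem isTropicalBasis_diff_singleton_uniform (hd : 1 ≤ d) (hn : d + 2 ≤ n)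
    (hM : M.circuits = {C | C.card = d + 1}) {C : Finset (Fin n)} (hC : C ∈ M.circuits) :
    IsTropicalBasis M (M.circuits \ {C}) := by
  refine ⟨Set.sdiff_subset, congrArg (TP n ∩ ·) (Set.Subset.antisymm ?_
    (Set.biInter_mono Set.sdiff_subset fun _ _ => subset_rfl))⟩
  rw [hM, Set.mem_ofPred_eq] at hC
  intro x hx
  simp only [Set.mem_iInter₂] at hx ⊢
  intro D hD
  by_cases hDC : D = C
  · subst hDC
    obtain ⟨b, -, hb⟩ := Finset.exists_mem_notMem_of_card_lt_card (s := D)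
      (t := Finset.univ) (by rw [Finset.card_univ, Fintype.card_fin]; omega)
    refine mem_V_of_forall_mem_V_insert_erase hb (by omega) fun e he => hx _ ⟨?_, ?_⟩
    · have hbe : b ∉ D.erase e := fun h => hb (Finset.mem_of_mem_erase h)
      rw [hM, Set.mem_ofPred_eq, Finset.card_insert_of_notMem hbe, Finset.card_erase_of_mem he, hC]
      omega
    · exact fun h => hb (h ▸ Finset.mem_insert_self b _)
  · exact hx D ⟨hD, hDC⟩

theorem not_hasUniqueMinimalTropicalBasis_uniform (hd : 1 ≤ d) (hn : d + 2 ≤ n)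
    (hM : M.circuits = {C | C.card = d + 1}) : ¬ HasUniqueMinimalTropicalBasis M := by
  rw [hasUniqueMinimalTropicalBasis_iff_exists_isLeast]
  rintro ⟨B₀, hB₀, hleast⟩
  have hempty : B₀ = ∅ := Set.eq_empty_of_forall_notMem fun C hC =>
    (hleast (isTropicalBasis_diff_singleton_uniform hd hn hM (hB₀.1 hC)) hC).2 rfl
  exact not_isTropicalBasis_empty M (hM ▸ nonempty_setOf_card_eq (by omega)) (hempty ▸ hB₀)

end Uniform

theorem stmt15_general {d n : ℕ} (hd : 2 ≤ d) (M : CircuitSet n)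
    (hM : M.circuits = {C : Finset (Fin n) | C.card = d + 1}) :
    ((∀ (K : Type) [Field K], Represents K M) ↔ Represents (ZMod 2) M) ∧
      (Represents (ZMod 2) M ↔ HasUniqueMinimalTropicalBasis M) := by
  rcases le_or_gt n (d + 1) with hsmall | hlarge
  · have hrep (K : Type) [Field K] : Represents K M := represents_uniform_of_le K hsmall hM
    have huniq : HasUniqueMinimalTropicalBasis M :=
      (hasUniqueMinimalTropicalBasis_iff_exists_isLeast M).2
        ⟨_, isLeast_circuits_of_subsingleton M (hM ▸ subsingleton_setOf_card_eq hsmall)⟩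
    exact ⟨⟨fun h => h _, fun _ => hrep⟩, iff_of_true (hrep _) huniq⟩
  · have hbinary := not_represents_zmod_two_uniform hd hlarge hM
    exact ⟨iff_of_false (fun h => hbinary (h _)) hbinary,
      iff_of_false hbinary (not_hasUniqueMinimalTropicalBasis_uniform (by omega) hlarge hM)⟩

theorem stmt15 {d n : ℕ} (hd : 2 ≤ d) (hn : d ≤ n) (M : CircuitSet n)
    (hM : M.circuits = {C : Finset (Fin n) | C.card = d + 1}) :
    ((∀ (K : Type) [Field K], Represents K M) ↔ Represents (ZMod 2) M) ∧
      (Represents (ZMod 2) M ↔ HasUniqueMinimalTropicalBasis M) :=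
  stmt15_general hd M hM
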